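/- arXiv:1905.06098 — 3 statements merged into one kernel-verified Lean document; each statement's English description precedes it below -/
import Mathlib

section
/- Let e be a functional on a space of curves that is invariant under Möbius transformations and admits an L²-gradient G_e, meaning (d/dε)e(f + εu)|_{ε=0} = ∫_{S¹} ⟨u(t), G_e(f)(t)⟩ |f'(t)| dt for all normal vector fields u along f. Then G_e vanishes at every round circle: if f₀ parametrizes a round circle, G_e(f₀) ≡ 0. -/
/-!
A similarity `x ↦ c + r • O x` carries the unit circle `S` of the plane `x₃ = 0` onto `f₀`, and
`e` is invariant under it, so it suffices to vary `S`. Take `χ` the indicator of a set `A`. The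
inversion followed by the reflection in `x₃ = 0` maps `(1 + εχ) • S` to `(1 + ζ ε χ) • S` with
`ζ ε = (1 + ε)⁻¹ - 1`, because `χ` takes only the values `0` and `1`; the reflection alone maps
`S + εχ • e₃` to `S - εχ • e₃`. As `ζ' 0 = -1`, in both cases the first variation of `e` equals its
own negative, hence vanishes (if it is not differentiable, `deriv` is `0` anyway). So
`∫ 1_A ⟪S, G⟫ = ∫ 1_A G₃ = 0` for every `A`, and the continuous normal field `G` vanishes.
-/

open Real MeasureTheory
open scoped RealInnerProductSpace

noncomputable section

abbrev E3 := EuclideanSpace ℝ (Fin 3)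

/-- Inversion in the unit sphere centered at the origin. -/
def inv3 (p : E3) : E3 := (‖p‖ ^ 2)⁻¹ • p

/-- Reflection in the plane `ℝ² × {0}`. -/
def refl3 (p : E3) : E3 := p - (2 * p 2) • EuclideanSpace.single 2 (1 : ℝ)

open Set Filter Topology

lemma deriv_eq_zero_of_comp_eventuallyEq {ρ ζ : ℝ → ℝ} {x : ℝ} (hζ : HasDerivAt ζ (-1) x)
    (hζx : ζ x = x) (hρζ : ρ ∘ ζ =ᶠ[𝓝 x] ρ) : deriv ρ x = 0 := by
  by_cases hρ : DifferentiableAt ℝ ρ x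
  · have hρ' : HasDerivAt ρ (deriv ρ x) (ζ x) := by rw [hζx]; exact hρ.hasDerivAt
    have hcomp : HasDerivAt (ρ ∘ ζ) (deriv ρ x * -1) x := hρ'.comp x hζ
    linarith [(hcomp.congr_of_eventuallyEq hρζ.symm).unique hρ.hasDerivAt]
  · exact deriv_zero_of_not_differentiableAt hρ

lemma eqOn_zero_of_integral_eq_zero {φ : ℝ → ℝ} (hφ : Continuous φ) (h0 : 0 ≤ φ) {a b : ℝ}
    (hab : a < b) (hI : ∫ t in a..b, φ t = 0) : EqOn φ 0 (Icc a b) := by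
  rw [intervalIntegral.integral_eq_zero_iff_of_le_of_nonneg_ae hab.le
    (Eventually.of_forall h0) (hφ.intervalIntegrable a b),
    Measure.restrict_congr_set Ioc_ae_eq_Icc] at hI
  exact Measure.eqOn_Icc_of_ae_eq volume hab.ne hI hφ.continuousOn continuousOn_const

lemma nonpos_of_integral_indicator_mul_eq_zero {φ : ℝ → ℝ} (hφ : Continuous φ) {a b : ℝ}
    (hab : a < b) (h : ∀ A : Set ℝ, ∫ t in a..b, A.indicator 1 t * φ t = 0) :
    ∀ t ∈ Icc a b, φ t ≤ 0 := by
  have hpos : ∫ t in a..b, max (φ t) 0 = ∫ t in a..b, {t | 0 < φ t}.indicator 1 t * φ t := by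
    congr 1 with t
    by_cases ht : 0 < φ t
    · simp [ht, ht.le]
    · simp [ht, not_lt.1 ht]
  intro t ht
  exact max_eq_right_iff.1 <| eqOn_zero_of_integral_eq_zero (hφ.max continuous_const)
    (fun _ => le_max_right _ _) hab (hpos.trans (h _)) ht

lemma eqOn_zero_of_integral_indicator_mul_eq_zero {φ : ℝ → ℝ} (hφ : Continuous φ) {a b : ℝ}
    (hab : a < b) (h : ∀ A : Set ℝ, ∫ t in a..b, A.indicator 1 t * φ t = 0) :
    EqOn φ 0 (Icc a b) := by
  have hneg (A : Set ℝ) : ∫ t in a..b, A.indicator 1 t * -φ t = 0 := by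
    simp [intervalIntegral.integral_neg, h A]
  intro t ht
  exact le_antisymm (nonpos_of_integral_indicator_mul_eq_zero hφ hab h t ht)
    (neg_nonpos.1 (nonpos_of_integral_indicator_mul_eq_zero hφ.neg hab hneg t ht))

def stdCircle (t : ℝ) : E3 :=
  cos (2 * π * t) • EuclideanSpace.single 0 1 + sin (2 * π * t) • EuclideanSpace.single 1 1

def stdCircleTangent (t : ℝ) : E3 :=
  (-sin (2 * π * t)) • EuclideanSpace.single 0 1 + cos (2 * π * t) • EuclideanSpace.single 1 1

lemma hasDerivAt_stdCircle (t : ℝ) :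
    HasDerivAt stdCircle ((2 * π) • stdCircleTangent t) t := by
  have hlin : HasDerivAt (fun s : ℝ => 2 * π * s) (2 * π) t := by
    simpa using (hasDerivAt_id t).const_mul (2 * π)
  have := (((hasDerivAt_cos _).comp t hlin).smul_const (EuclideanSpace.single 0 (1 : ℝ) : E3)).add
    (((hasDerivAt_sin _).comp t hlin).smul_const (EuclideanSpace.single 1 (1 : ℝ) : E3))
  refine this.congr_deriv ?_
  simp only [stdCircleTangent, smul_add, smul_smul]
  congr 1 <;> congr 1 <;> ring

lemma continuous_stdCircle : Continuous stdCircle :=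
  continuous_iff_continuousAt.2 fun t => (hasDerivAt_stdCircle t).continuousAt

lemma stdCircle_apply_two (t : ℝ) : stdCircle t 2 = 0 := by
  simp [stdCircle]

lemma norm_stdCircle (t : ℝ) : ‖stdCircle t‖ = 1 := by
  simp [stdCircle, EuclideanSpace.norm_eq, Fin.sum_univ_three]

lemma norm_stdCircleTangent (t : ℝ) : ‖stdCircleTangent t‖ = 1 := by
  simp [stdCircleTangent, EuclideanSpace.norm_eq, Fin.sum_univ_three]

lemma eq_zero_of_inner_stdCircle_eq_zero {t : ℝ} {y : E3} (hS : ⟪stdCircle t, y⟫ = 0)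
    (hT : ⟪stdCircleTangent t, y⟫ = 0) (h2 : y 2 = 0) : y = 0 := by
  simp only [stdCircle, stdCircleTangent, inner_add_left, real_inner_smul_left,
    EuclideanSpace.inner_single_left, ringHom_apply, one_mul] at hS hT
  have hsc := sin_sq_add_cos_sq (2 * π * t)
  have h0 : y 0 = 0 := by
    linear_combination cos (2 * π * t) * hS - sin (2 * π * t) * hT - y 0 * hsc
  have h1 : y 1 = 0 := by
    linear_combination sin (2 * π * t) * hS + cos (2 * π * t) * hT - y 1 * hsc
  ext i
  fin_cases i <;> simp [h0, h1, h2]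

lemma refl3_inv3_smul_stdCircle {a : ℝ} (ha : 0 < a) (t : ℝ) :
    refl3 (inv3 (a • stdCircle t)) = a⁻¹ • stdCircle t := by
  have hnorm : ‖a • stdCircle t‖ = a := by
    rw [norm_smul, norm_stdCircle, mul_one, norm_of_nonneg ha.le]
  rw [inv3, hnorm, smul_smul, refl3]
  simp only [PiLp.smul_apply, stdCircle_apply_two, smul_eq_mul, mul_zero, zero_smul, sub_zero]
  congr 1
  field_simp

lemma exists_linearIsometryEquiv_single_eq {v w : E3} (hv : ‖v‖ = 1) (hw : ‖w‖ = 1)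
    (hvw : ⟪v, w⟫ = 0) :
    ∃ O : E3 ≃ₗᵢ[ℝ] E3, O (EuclideanSpace.single 0 1) = v ∧ O (EuclideanSpace.single 1 1) = w := by
  have hwv : ⟪w, v⟫ = 0 := by rwa [real_inner_comm]
  have hon : Orthonormal ℝ (({0, 1} : Set (Fin 3)).domRestrict ![v, w, 0]) := by
    rw [orthonormal_iff_ite]
    rintro ⟨i, hi⟩ ⟨j, hj⟩
    simp only [Set.mem_insert_iff, Set.mem_singleton_iff] at hi hj
    rcases hi with rfl | rfl <;> rcases hj with rfl | rfl <;>
      simp [Set.domRestrict, hv, hw, hvw, hwv]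
  obtain ⟨b, hb⟩ := hon.exists_orthonormalBasis_extension_of_card_eq (by simp)
  exact ⟨b.repr.symm, by simpa using hb 0 (by simp), by simpa using hb 1 (by simp)⟩

lemma hasDerivAt_circle (c : E3) (r : ℝ) (O : E3 ≃ₗᵢ[ℝ] E3) (t : ℝ) :
    HasDerivAt (fun s => c + r • O (stdCircle s)) ((2 * π * r) • O (stdCircleTangent t)) t := by
  have := ((O.toContinuousLinearEquiv.hasFDerivAt.comp_hasDerivAt t
    (hasDerivAt_stdCircle t)).const_smul r).const_add c
  refine this.congr_deriv ?_
  simp [smul_smul, mul_comm]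

section Functional

variable {e : (ℝ → E3) → ℝ}

lemma apply_similarity_eq (htrans : ∀ (f : ℝ → E3) (p : E3), e (fun t => p + f t) = e f)
    (hscale : ∀ (f : ℝ → E3) (k : ℝ), 0 < k → e (fun t => k • f t) = e f)
    (hiso : ∀ (f : ℝ → E3) (O : E3 ≃ₗᵢ[ℝ] E3), e (fun t => O (f t)) = e f)
    (c : E3) {r : ℝ} (hr : 0 < r) (O : E3 ≃ₗᵢ[ℝ] E3) (f : ℝ → E3) :
    e (fun t => c + r • O (f t)) = e f := by
  rw [htrans (fun t => r • O (f t)) c, hscale (fun t => O (f t)) r hr, hiso f O]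

lemma deriv_radial_indicator_variation_eq_zero
    (hinv : ∀ f : ℝ → E3, (∀ t, f t ≠ 0) → e (fun t => refl3 (inv3 (f t))) = e f)
    (A : Set ℝ) :
    deriv (fun ε : ℝ =>
      e (fun t => stdCircle t + ε • A.indicator (1 : ℝ → ℝ) t • stdCircle t)) 0 = 0 := by
  set ρ := fun ε : ℝ => e (fun t => stdCircle t + ε • A.indicator (1 : ℝ → ℝ) t • stdCircle t)
  have hρ (ε : ℝ) : ρ ε = e (fun t => (1 + ε * A.indicator 1 t) • stdCircle t) := by
    simp only [ρ, add_smul, one_smul, smul_smul]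
  have hζ : HasDerivAt (fun ε : ℝ => (1 + ε)⁻¹ - 1) (-1) 0 := by
    simpa using (((hasDerivAt_id (0 : ℝ)).const_add 1).inv (by norm_num)).sub_const 1
  refine deriv_eq_zero_of_comp_eventuallyEq hζ (by norm_num) ?_
  filter_upwards [Ioi_mem_nhds (show (-1 : ℝ) < 0 by norm_num)] with ε hε
  have hpos (t : ℝ) : 0 < 1 + ε * A.indicator 1 t := by
    by_cases ht : t ∈ A
    · simp only [ht, indicator_of_mem, Pi.one_apply, mul_one]
      linarith [mem_Ioi.1 hε]
    · simp [ht]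
  have hne (t : ℝ) : (1 + ε * A.indicator 1 t) • stdCircle t ≠ 0 :=
    smul_ne_zero (hpos t).ne' (norm_ne_zero_iff.1 (by simp [norm_stdCircle]))
  rw [Function.comp_apply, hρ, hρ, ← hinv _ hne]
  congr 1 with t
  rw [refl3_inv3_smul_stdCircle (hpos t)]
  by_cases ht : t ∈ A <;> simp [ht]

lemma deriv_vertical_variation_eq_zero
    (hiso : ∀ (f : ℝ → E3) (O : E3 ≃ₗᵢ[ℝ] E3), e (fun t => O (f t)) = e f) (χ : ℝ → ℝ) :
    deriv (fun ε : ℝ =>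
      e (fun t => stdCircle t + ε • χ t • EuclideanSpace.single 2 (1 : ℝ))) 0 = 0 := by
  set R : E3 ≃ₗᵢ[ℝ] E3 := (ℝ ∙ (EuclideanSpace.single 2 (1 : ℝ) : E3))ᗮ.reflection
  have hRS (t : ℝ) : R (stdCircle t) = stdCircle t := by
    refine Submodule.reflection_mem_subspace_eq_self ?_
    rw [Submodule.mem_orthogonal_singleton_iff_inner_right, EuclideanSpace.inner_single_left]
    simp [stdCircle_apply_two]
  have hRe : R (EuclideanSpace.single 2 1) = -EuclideanSpace.single 2 1 :=
    Submodule.reflection_orthogonalComplement_singleton_eq_neg _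
  refine deriv_eq_zero_of_comp_eventuallyEq (hasDerivAt_neg 0) neg_zero
    (Eventually.of_forall fun ε => ?_)
  rw [Function.comp_apply, ← hiso _ R]
  congr 1 with t
  simp [hRS, hRe]

lemma integral_inner_symm_gradient_eq_zero {G : (ℝ → E3) → ℝ → E3}
    (hgrad : ∀ f u : ℝ → E3,
      deriv (fun ε : ℝ => e (fun t => f t + ε • u t)) 0
        = ∫ t in (0:ℝ)..1, ⟪u t, G f t⟫ * ‖deriv f t‖)
    {c : E3} {r : ℝ} (hr : 0 < r) {O : E3 ≃ₗᵢ[ℝ] E3}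
    (hsim : ∀ f : ℝ → E3, e (fun t => c + r • O (f t)) = e f) (x : ℝ → E3)
    (hx : deriv (fun ε : ℝ => e (fun t => stdCircle t + ε • x t)) 0 = 0) :
    ∫ t in (0:ℝ)..1, ⟪x t, O.symm (G (fun s => c + r • O (stdCircle s)) t)⟫ = 0 := by
  have h := hgrad (fun s => c + r • O (stdCircle s)) (fun t => r • O (x t))
  have hvar : (fun ε : ℝ => e (fun t => c + r • O (stdCircle t) + ε • r • O (x t)))
      = fun ε => e (fun t => stdCircle t + ε • x t) := by
    funext ε
    rw [← hsim (fun t => stdCircle t + ε • x t)]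
    congr 1 with t : 1
    simp only [map_add, map_smul, smul_add, smul_comm ε r, add_assoc]
  have hint (t : ℝ) : ⟪r • O (x t), G (fun s => c + r • O (stdCircle s)) t⟫
        * ‖deriv (fun s => c + r • O (stdCircle s)) t‖
      = (2 * π * r ^ 2) * ⟪x t, O.symm (G (fun s => c + r • O (stdCircle s)) t)⟫ := by
    rw [(hasDerivAt_circle c r O t).deriv, norm_smul, LinearIsometryEquiv.norm_map,
      norm_stdCircleTangent, real_inner_smul_left, O.inner_map_eq_flip, Real.norm_eq_abs,
      abs_of_pos (by positivity)]
    ring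
  simp only [hvar, hx, hint, intervalIntegral.integral_const_mul] at h
  exact (mul_eq_zero.1 h.symm).resolve_left (by positivity)

end Functional

/-- A Möbius invariant functional `e` on the space of knots admitting an
`L²`-gradient `G` has vanishing gradient at every round circle. -/
theorem stmt7 (e : (ℝ → E3) → ℝ) (G : (ℝ → E3) → ℝ → E3)
    -- `G` is the `L²`-gradient of `e`
    (hgrad : ∀ f u : ℝ → E3,
      deriv (fun ε : ℝ => e (fun t => f t + ε • u t)) 0
        = ∫ t in (0:ℝ)..1, ⟪u t, G f t⟫ * ‖deriv f t‖)
    -- Möbius invariance of `e` (instances under the generators of the Möbius group):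
    (hinv : ∀ f : ℝ → E3, (∀ t, f t ≠ 0) →
      e (fun t => refl3 (inv3 (f t))) = e f)
    (htrans : ∀ (f : ℝ → E3) (p : E3), e (fun t => p + f t) = e f)
    (hscale : ∀ (f : ℝ → E3) (k : ℝ), 0 < k → e (fun t => k • f t) = e f)
    (hiso : ∀ (f : ℝ → E3) (O : E3 ≃ₗᵢ[ℝ] E3), e (fun t => O (f t)) = e f)
    -- `f₀` parametrizes a round circle of radius `r` and center `c`
    (c v w : E3) (r : ℝ) (hr : 0 < r)
    (hv : ‖v‖ = 1) (hw : ‖w‖ = 1) (hvw : ⟪v, w⟫ = 0)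
    (f₀ : ℝ → E3)
    (hf₀ : ∀ t, f₀ t = c + (r * Real.cos (2 * π * t)) • v + (r * Real.sin (2 * π * t)) • w)
    -- `G f₀` is a normal field along `f₀`, continuous and periodic
    (hGn : ∀ t, ⟪G f₀ t, deriv f₀ t⟫ = 0)
    (hGc : Continuous (G f₀)) (hGp : Function.Periodic (G f₀) 1) :
    ∀ t, G f₀ t = 0 := by
  obtain ⟨O, hOv, hOw⟩ := exists_linearIsometryEquiv_single_eq hv hw hvw
  obtain rfl : f₀ = fun t => c + r • O (stdCircle t) := by
    funext t
    simp only [hf₀, stdCircle, map_add, map_smul, hOv, hOw, smul_add, smul_smul, add_assoc]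
  set g := fun t => O.symm (G (fun t => c + r • O (stdCircle t)) t)
  have hg : Continuous g := O.symm.continuous.comp hGc
  have hvar := integral_inner_symm_gradient_eq_zero hgrad hr
    (apply_similarity_eq htrans hscale hiso c hr O)
  have hradial : EqOn (fun t => ⟪stdCircle t, g t⟫) 0 (Icc 0 1) :=
    eqOn_zero_of_integral_indicator_mul_eq_zero (continuous_stdCircle.inner hg) one_pos
      fun A => by
        simpa [real_inner_smul_left] using hvar _ (deriv_radial_indicator_variation_eq_zero hinv A)
  have hvertical : EqOn (fun t => g t 2) 0 (Icc 0 1) :=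
    eqOn_zero_of_integral_indicator_mul_eq_zero ((PiLp.continuous_apply 2 _ 2).comp hg) one_pos
      fun A => by
        simpa [real_inner_smul_left, EuclideanSpace.inner_single_left] using
          hvar _ (deriv_vertical_variation_eq_zero hiso (A.indicator 1))
  have htangent (t : ℝ) : ⟪stdCircleTangent t, g t⟫ = 0 := by
    have h := hGn t
    rw [(hasDerivAt_circle c r O t).deriv, real_inner_smul_right, real_inner_comm,
      O.inner_map_eq_flip] at h
    exact (mul_eq_zero.1 h).resolve_left (by positivity)
  intro t
  obtain ⟨s, hs, hts⟩ := hGp.exists_mem_Ico₀ one_pos t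
  have hs' := Ico_subset_Icc_self hs
  rw [hts, ← O.apply_symm_apply (G _ s), show O.symm (G _ s) = g s from rfl,
    eq_zero_of_inner_stdCircle_eq_zero (hradial hs') (htangent s) (hvertical hs'), map_zero]

end
end

section
/- Let Φ: K° × S¹ → ℝ be positive and continuous in the second variable, where K° is the set of non-circular knots. The Φ-weighted inner product ⟨u,v⟩_Φ = ∫_{S¹} ⟨u(t),v(t)⟩ Φ(f,t) |f'(t)| dt on normal fields along f is invariant under a Möbius transformation T (i.e., ⟨T_*u, T_*v⟩_Φ computed along T∘f equals ⟨u,v⟩_Φ along f for all u, v) if and only if Φ(T∘f, t) = |T'(f(t))|^{−6} Φ(f, t) for all t. -/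
/-!
Pushing forward by `T` multiplies `⟨u, v⟩` by `|T'|⁴` and the line element by `|T'|²`, so
invariance says that the weights `|T'|⁶ Φ(T∘f, ·) |f'|` and `Φ(f, ·) |f'|` give the same integral
of `⟨u, v⟩` for all normal fields. Two continuous weights with this property coincide: if
`w₁ > w₂` at `t₀`, take `e ≠ 0` normal to `f'(t₀)`, let `w` be its normal component along `f` and
`u = (w₁ - w₂)⁺ • w`; then `‖u‖² (w₁ - w₂) ≥ 0` everywhere and `> 0` at `t₀`, so its integral
over a period cannot vanish.
-/

open MeasureTheory
open scoped RealInnerProductSpace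

noncomputable section

open Module

theorem Function.Periodic.deriv {𝕜 F : Type*} [NontriviallyNormedField 𝕜] [NormedAddCommGroup F]
    [NormedSpace 𝕜 F] {f : 𝕜 → F} {c : 𝕜} (h : Function.Periodic f c) :
    Function.Periodic (deriv f) c := fun t => by
  rw [← deriv_comp_add_const, funext h]

theorem Function.Periodic.intervalIntegral_pos {h : ℝ → ℝ} {p : ℝ} (hper : Function.Periodic h p)
    (hp : 0 < p) (hc : Continuous h) (hnn : ∀ t, 0 ≤ h t) {t₀ : ℝ} (ht₀ : 0 < h t₀) :
    0 < ∫ t in (0:ℝ)..p, h t := by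
  rw [← zero_add p, ← hper.intervalIntegral_add_eq t₀ 0]
  exact intervalIntegral.integral_pos (by linarith) hc.continuousOn (fun t _ => hnn t)
    ⟨t₀, Set.left_mem_Icc.mpr (by linarith), ht₀⟩

section

variable {E : Type*} [NormedAddCommGroup E] [InnerProductSpace ℝ E]

theorem exists_ne_zero_inner_eq_zero [FiniteDimensional ℝ E] (hE : 2 ≤ finrank ℝ E) (v : E) :
    ∃ e : E, e ≠ 0 ∧ ⟪e, v⟫ = 0 := by
  have : Nontrivial (ℝ ∙ v)ᗮ := by
    apply nontrivial_of_finrank_pos (R := ℝ)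
    have := (ℝ ∙ v).finrank_add_finrank_orthogonal
    have : finrank ℝ (ℝ ∙ v) ≤ 1 := by simpa using finrank_span_le_card ({v} : Set E)
    omega
  obtain ⟨e, he⟩ := exists_ne (0 : (ℝ ∙ v)ᗮ)
  exact ⟨e, by simpa using he, Submodule.mem_orthogonal_singleton_iff_inner_left.mp e.2⟩

def normalPart {α : Type*} (d : α → E) (e : E) (t : α) : E :=
  e - (⟪e, d t⟫ / ‖d t‖ ^ 2) • d t

variable {α : Type*} {d : α → E} {e : E}

theorem inner_normalPart (t : α) : ⟪normalPart d e t, d t⟫ = 0 := by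
  rcases eq_or_ne (d t) 0 with hd | hd
  · simp [hd]
  · rw [normalPart, inner_sub_left, real_inner_smul_left, real_inner_self_eq_norm_sq,
      div_mul_cancel₀ _ (by positivity), sub_self]

theorem normalPart_of_inner_eq_zero {t : α} (h : ⟪e, d t⟫ = 0) : normalPart d e t = e := by
  simp [normalPart, h]

theorem continuous_normalPart [TopologicalSpace α] (hd : Continuous d) (hd0 : ∀ t, d t ≠ 0) :
    Continuous (normalPart d e) :=
  continuous_const.sub <|
    ((continuous_const.inner hd).div (hd.norm.pow 2) fun t => by simpa using hd0 t).smul hd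

theorem Function.Periodic.normalPart [Add α] {c : α} (h : Function.Periodic d c) :
    Function.Periodic (normalPart d e) c := fun t => by
  simp only [_root_.normalPart, h t]

theorem le_of_forall_integral_norm_sq_mul_eq [FiniteDimensional ℝ E] (hE : 2 ≤ finrank ℝ E)
    {p : ℝ} (hp : 0 < p) {d : ℝ → E} (hd : Continuous d) (hdper : Function.Periodic d p)
    (hd0 : ∀ t, d t ≠ 0) {w₁ w₂ : ℝ → ℝ} (hw₁ : Continuous w₁) (hw₂ : Continuous w₂)
    (hw₁per : Function.Periodic w₁ p) (hw₂per : Function.Periodic w₂ p)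
    (H : ∀ u : ℝ → E, Continuous u → Function.Periodic u p → (∀ t, ⟪u t, d t⟫ = 0) →
      ∫ t in (0:ℝ)..p, ‖u t‖ ^ 2 * w₁ t = ∫ t in (0:ℝ)..p, ‖u t‖ ^ 2 * w₂ t) :
    w₁ ≤ w₂ := by
  intro t₀
  by_contra! hlt
  obtain ⟨e, he, het₀⟩ := exists_ne_zero_inner_eq_zero hE (d t₀)
  set g := fun t => w₁ t - w₂ t
  set u := fun t => max (g t) 0 • normalPart d e t
  have hu : Continuous u :=
    ((hw₁.sub hw₂).max continuous_const).smul (continuous_normalPart hd hd0)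
  have hg : Function.Periodic g p := hw₁per.sub hw₂per
  have huper : Function.Periodic u p := fun t => by simp only [u, hg t, hdper.normalPart t]
  have hsq : ∀ t, ‖u t‖ ^ 2 * g t = max (g t) 0 ^ 2 * g t * ‖normalPart d e t‖ ^ 2 := fun t => by
    simp only [u, norm_smul, Real.norm_eq_abs, mul_pow, sq_abs]
    ring
  have hint : ∀ w : ℝ → ℝ, Continuous w → Continuous fun t => ‖u t‖ ^ 2 * w t := by fun_prop
  have hzero : ∫ t in (0:ℝ)..p, ‖u t‖ ^ 2 * g t = 0 := by
    simp only [g, mul_sub]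
    rw [intervalIntegral.integral_sub ((hint w₁ hw₁).intervalIntegrable _ _)
      ((hint w₂ hw₂).intervalIntegrable _ _), H u hu huper (fun t => by
        simp only [u, inner_smul_left, inner_normalPart, mul_zero]), sub_self]
  refine (Function.Periodic.intervalIntegral_pos (fun t => by simp only [huper t, hg t]) hp
    (hint g (hw₁.sub hw₂)) (fun t => ?_) (t₀ := t₀) ?_).ne' hzero
  · rw [hsq]
    refine mul_nonneg ?_ (sq_nonneg _)
    rcases le_total (g t) 0 with h | h
    · simp [max_eq_right h]
    · rw [max_eq_left h]; positivity
  · have hg₀ : 0 < g t₀ := sub_pos.mpr hlt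
    rw [hsq, max_eq_left hg₀.le, normalPart_of_inner_eq_zero het₀]
    have := norm_pos_iff.mpr he
    positivity

theorem forall_integral_inner_mul_eq_iff [FiniteDimensional ℝ E] (hE : 2 ≤ finrank ℝ E)
    {p : ℝ} (hp : 0 < p) {d : ℝ → E} (hd : Continuous d) (hdper : Function.Periodic d p)
    (hd0 : ∀ t, d t ≠ 0) {w₁ w₂ : ℝ → ℝ} (hw₁ : Continuous w₁) (hw₂ : Continuous w₂)
    (hw₁per : Function.Periodic w₁ p) (hw₂per : Function.Periodic w₂ p) :
    (∀ u v : ℝ → E, Continuous u → Continuous v →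
        Function.Periodic u p → Function.Periodic v p →
        (∀ t, ⟪u t, d t⟫ = 0) → (∀ t, ⟪v t, d t⟫ = 0) →
      ∫ t in (0:ℝ)..p, ⟪u t, v t⟫ * w₁ t = ∫ t in (0:ℝ)..p, ⟪u t, v t⟫ * w₂ t) ↔ w₁ = w₂ := by
  refine ⟨fun H => ?_, by rintro rfl; intros; rfl⟩
  have H' : ∀ u : ℝ → E, Continuous u → Function.Periodic u p → (∀ t, ⟪u t, d t⟫ = 0) →
      ∫ t in (0:ℝ)..p, ‖u t‖ ^ 2 * w₁ t = ∫ t in (0:ℝ)..p, ‖u t‖ ^ 2 * w₂ t :=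
    fun u hu huper hud => by
      simpa only [real_inner_self_eq_norm_sq] using H u u hu hu huper huper hud hud
  exact le_antisymm
    (le_of_forall_integral_norm_sq_mul_eq hE hp hd hdper hd0 hw₁ hw₂ hw₁per hw₂per H')
    (le_of_forall_integral_norm_sq_mul_eq hE hp hd hdper hd0 hw₂ hw₁ hw₂per hw₁per
      fun u hu huper hud => (H' u hu huper hud).symm)

end

theorem stmt10_general (f : ℝ → E3) (T : E3 → E3) (Φ : (ℝ → E3) → ℝ → ℝ) (φ : ℝ → ℝ)
    -- `φ t` is the conformal factor `|T'(f(t))|`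
    (hφdef : ∀ t, φ t = |LinearMap.det ((fderiv ℝ T (f t) : E3 →L[ℝ] E3) :
        E3 →ₗ[ℝ] E3)| ^ ((1 : ℝ) / 6))
    (hφpos : ∀ t, 0 < φ t) (hφc : Continuous φ)
    -- the knot `f` : periodic, `C¹`, regular
    (hfper : Function.Periodic f 1)
    (hf' : Continuous (deriv f)) (hfreg : ∀ t, deriv f t ≠ 0)
    -- condition (i) on the weight `Φ` : positive and continuous in `t`
    (hΦc : Continuous (Φ f)) (hΦc' : Continuous (Φ (fun s => T (f s))))
    (hΦper : Function.Periodic (Φ f) 1)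
    (hΦper' : Function.Periodic (Φ (fun s => T (f s))) 1)
    -- conformality of `T` along `f` : `⟨T_*u, T_*v⟩ = |T'(f t)|⁴⟨u,v⟩` and
    -- `|(T∘f)'(t)| = |T'(f t)|² |f'(t)|`
    (hconf : ∀ (t : ℝ) (x y : E3),
      ⟪fderiv ℝ T (f t) x, fderiv ℝ T (f t) y⟫ = φ t ^ 4 * ⟪x, y⟫)
    (htan : ∀ t, ‖deriv (fun s => T (f s)) t‖ = φ t ^ 2 * ‖deriv f t‖) :
    -- Möbius invariance of the `Φ`-weighted inner product on normal fields along `f`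
    (∀ u v : ℝ → E3, Continuous u → Continuous v →
        Function.Periodic u 1 → Function.Periodic v 1 →
        (∀ t, ⟪u t, deriv f t⟫ = 0) → (∀ t, ⟪v t, deriv f t⟫ = 0) →
      ∫ t in (0:ℝ)..1, ⟪fderiv ℝ T (f t) (u t), fderiv ℝ T (f t) (v t)⟫
          * Φ (fun s => T (f s)) t * ‖deriv (fun s => T (f s)) t‖
        = ∫ t in (0:ℝ)..1, ⟪u t, v t⟫ * Φ f t * ‖deriv f t‖)
    ↔ (∀ t, Φ (fun s => T (f s)) t = (φ t ^ 6)⁻¹ * Φ f t) := by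
  have hφper : Function.Periodic φ 1 := fun t => by rw [hφdef, hφdef, hfper t]
  have hf'per : Function.Periodic (deriv f) 1 := hfper.deriv
  have hpush : ∀ t (x y : E3), ⟪fderiv ℝ T (f t) x, fderiv ℝ T (f t) y⟫
      * Φ (fun s => T (f s)) t * ‖deriv (fun s => T (f s)) t‖
      = ⟪x, y⟫ * (φ t ^ 6 * Φ (fun s => T (f s)) t * ‖deriv f t‖) := fun t x y => by
    rw [hconf, htan]; ring
  simp only [hpush, mul_assoc]
  rw [forall_integral_inner_mul_eq_iff (by simp) one_pos hf' hf'per hfreg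
    (w₁ := fun t => φ t ^ 6 * (Φ (fun s => T (f s)) t * ‖deriv f t‖))
    (w₂ := fun t => Φ f t * ‖deriv f t‖) (by fun_prop) (by fun_prop)
    (fun t => by simp only [hφper t, hΦper' t, hf'per t])
    (fun t => by simp only [hΦper t, hf'per t]), funext_iff]
  refine forall_congr' fun t => ?_
  rw [← mul_assoc, mul_left_inj' (norm_ne_zero_iff.mpr (hfreg t)),
    eq_inv_mul_iff_mul_eq₀ (pow_ne_zero 6 (hφpos t).ne')]

/-- The Φ-weighted inner product `⟨u,v⟩_Φ = ∫ ⟨u,v⟩ Φ(f,t) |f'(t)| dt` is invariant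
under a Möbius transformation `T` if and only if
`Φ(T∘f, t) = |T'(f(t))|⁻⁶ Φ(f, t)` for all `t`, where `|T'(p)| = |det DT(p)|^(1/6)`. -/
theorem stmt10 (f : ℝ → E3) (T : E3 → E3) (Φ : (ℝ → E3) → ℝ → ℝ) (φ : ℝ → ℝ)
    -- `φ t` is the conformal factor `|T'(f(t))|`
    (hφdef : ∀ t, φ t = |LinearMap.det ((fderiv ℝ T (f t) : E3 →L[ℝ] E3) :
        E3 →ₗ[ℝ] E3)| ^ ((1 : ℝ) / 6))
    (hφpos : ∀ t, 0 < φ t) (hφc : Continuous φ)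
    -- the knot `f` : periodic, `C¹`, regular
    (hfper : Function.Periodic f 1) (hf : Differentiable ℝ f)
    (hf' : Continuous (deriv f)) (hfreg : ∀ t, deriv f t ≠ 0)
    -- condition (i) on the weight `Φ` : positive and continuous in `t`
    (hΦpos : ∀ t, 0 < Φ f t) (hΦpos' : ∀ t, 0 < Φ (fun s => T (f s)) t)
    (hΦc : Continuous (Φ f)) (hΦc' : Continuous (Φ (fun s => T (f s))))
    (hΦper : Function.Periodic (Φ f) 1)
    (hΦper' : Function.Periodic (Φ (fun s => T (f s))) 1)
    -- conformality of `T` along `f` : `⟨T_*u, T_*v⟩ = |T'(f t)|⁴⟨u,v⟩` and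
    -- `|(T∘f)'(t)| = |T'(f t)|² |f'(t)|`
    (hconf : ∀ (t : ℝ) (x y : E3),
      ⟪fderiv ℝ T (f t) x, fderiv ℝ T (f t) y⟫ = φ t ^ 4 * ⟪x, y⟫)
    (htan : ∀ t, ‖deriv (fun s => T (f s)) t‖ = φ t ^ 2 * ‖deriv f t‖) :
    -- Möbius invariance of the `Φ`-weighted inner product on normal fields along `f`
    (∀ u v : ℝ → E3, Continuous u → Continuous v →
        Function.Periodic u 1 → Function.Periodic v 1 →
        (∀ t, ⟪u t, deriv f t⟫ = 0) → (∀ t, ⟪v t, deriv f t⟫ = 0) →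
      ∫ t in (0:ℝ)..1, ⟪fderiv ℝ T (f t) (u t), fderiv ℝ T (f t) (v t)⟫
          * Φ (fun s => T (f s)) t * ‖deriv (fun s => T (f s)) t‖
        = ∫ t in (0:ℝ)..1, ⟪u t, v t⟫ * Φ f t * ‖deriv f t‖)
    ↔ (∀ t, Φ (fun s => T (f s)) t = (φ t ^ 6)⁻¹ * Φ f t) :=
  stmt10_general f T Φ φ hφdef hφpos hφc hfper hf' hfreg hΦc hΦc' hΦper hΦper' hconf htan

end
end

section
/- For a knot f and the unit-sphere inversion I(p) = p/|p|² (with f avoiding the origin), the 2-form coefficient ψ(f,s,t) = |f'(s)||f'(t)|/|f(s)−f(t)|² is Möbius invariant: |(I∘f)'(s)||(I∘f)'(t)|/|(I∘f)(s)−(I∘f)(t)|² = |f'(s)||f'(t)|/|f(s)−f(t)|² for all s ≠ t. -/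
noncomputable section

/-!
Inversion in the sphere of radius `R` about `c` scales lengths of tangent vectors at `x` by
`(R / |x - c|)²` and chords by `R² / (|x - c| |y - c|)`, so the two factors cancel in
`|f'(s)| |f'(t)| / |f(s) - f(t)|²`.
-/

open EuclideanGeometry

section Inversion

variable {F : Type*} [NormedAddCommGroup F] [InnerProductSpace ℝ F] {c : F} {R : ℝ}

def mobiusFormCoeff (f : ℝ → F) (s t : ℝ) : ℝ :=
  ‖deriv f s‖ * ‖deriv f t‖ / ‖f s - f t‖ ^ 2

theorem norm_deriv_inversion_comp {f : ℝ → F} {t : ℝ} (hf : DifferentiableAt ℝ f t)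
    (ht : f t ≠ c) :
    ‖deriv (fun y => inversion c R (f y)) t‖ = (R / dist (f t) c) ^ 2 * ‖deriv f t‖ := by
  have hderiv : HasDerivAt (fun y => inversion c R (f y)) _ t :=
    (hasFDerivAt_inversion ht).comp_hasDerivAt t hf.hasDerivAt
  rw [hderiv.deriv, smul_apply, norm_smul, Real.norm_of_nonneg (sq_nonneg _)]
  exact congrArg _ ((ℝ ∙ (f t - c))ᗮ.reflection.norm_map _)

theorem mobiusFormCoeff_inversion_comp (hR : R ≠ 0) {f : ℝ → F} {s t : ℝ}
    (hfs : DifferentiableAt ℝ f s) (hft : DifferentiableAt ℝ f t) (hs : f s ≠ c)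
    (ht : f t ≠ c) :
    mobiusFormCoeff (fun y => inversion c R (f y)) s t = mobiusFormCoeff f s t := by
  have hchord := dist_inversion_inversion hs ht R
  set k := R ^ 2 / (dist (f s) c * dist (f t) c)
  rw [dist_eq_norm, dist_eq_norm] at hchord
  have hk : k ≠ 0 := by
    have := dist_pos.2 hs
    have := dist_pos.2 ht
    positivity
  unfold mobiusFormCoeff
  rw [norm_deriv_inversion_comp hfs hs, norm_deriv_inversion_comp hft ht, hchord]
  calc (R / dist (f s) c) ^ 2 * ‖deriv f s‖ * ((R / dist (f t) c) ^ 2 * ‖deriv f t‖)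
        / (k * ‖f s - f t‖) ^ 2
      = k ^ 2 * (‖deriv f s‖ * ‖deriv f t‖) / (k ^ 2 * ‖f s - f t‖ ^ 2) := by ring
    _ = ‖deriv f s‖ * ‖deriv f t‖ / ‖f s - f t‖ ^ 2 := mul_div_mul_left _ _ (pow_ne_zero 2 hk)

end Inversion

theorem inv3_eq_inversion (p : E3) : inv3 p = inversion 0 1 p := by
  simp [inv3, inversion, dist_eq_norm]

theorem stmt14_general (f : ℝ → E3) (hf : Differentiable ℝ f) (h0 : ∀ t, f t ≠ 0) :
    ∀ s t : ℝ, s ≠ t →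
      ‖deriv (fun y => inv3 (f y)) s‖ * ‖deriv (fun y => inv3 (f y)) t‖
          / ‖inv3 (f s) - inv3 (f t)‖ ^ 2
        = ‖deriv f s‖ * ‖deriv f t‖ / ‖f s - f t‖ ^ 2 := by
  intro s t _
  simpa only [mobiusFormCoeff, inv3_eq_inversion] using
    mobiusFormCoeff_inversion_comp one_ne_zero (hf s) (hf t) (h0 s) (h0 t)

/-- The 2-form coefficient `|f'(s)||f'(t)|/|f(s)−f(t)|²` is invariant under the
unit-sphere inversion `I(p) = p/|p|²` for a knot `f` avoiding the origin. -/
theorem stmt14 (f : ℝ → E3) (hf : Differentiable ℝ f) (h0 : ∀ t, f t ≠ 0)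
    (hinj : ∀ s t : ℝ, s ≠ t → f s ≠ f t) :
    ∀ s t : ℝ, s ≠ t →
      ‖deriv (fun y => inv3 (f y)) s‖ * ‖deriv (fun y => inv3 (f y)) t‖
          / ‖inv3 (f s) - inv3 (f t)‖ ^ 2
        = ‖deriv f s‖ * ‖deriv f t‖ / ‖f s - f t‖ ^ 2 :=
  stmt14_general f hf h0

end
end
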